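/- Let • be an external action of a local groupoid G over M on a totally intransitive groupoid H over M. Then the semidirect product P := H ⋊ G, with the structure maps α_P(h,g) := α_G(g), β_P(h,g) := β_G(g), ε_P(m) := (ε_H(m), ε_G(m)), i_P(h,g) := ((g⁻¹•h)⁻¹, g⁻¹), P_m := {((h₁,g₁),(h₂,g₂)) ∈ P₂ : (g₁,g₂) ∈ G_m} and m_P((h₁,g₁),(h₂,g₂)) := (h₁(g₁•h₂), g₁g₂), is a well-defined local groupoid over M; in particular all structure maps take values in P and the five local groupoid axioms hold. -/
import Mathlib


/-- A local groupoid over a set `M` (the algebraic axioms of a local Lie groupoid,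
with smoothness omitted).  The multiplication is encoded as a total function `mul`
together with a predicate `Dm` describing the set `G_m` of multiplicable pairs;
the value of `mul` outside of `Dm` is irrelevant. -/
structure LocalGroupoid (M : Type*) (G : Type*) where
  src : G → M
  tgt : G → M
  e : M → G
  inv : G → G
  Dm : G → G → Prop
  mul : G → G → G
  comp_of_dm : ∀ {g₁ g₂ : G}, Dm g₁ g₂ → tgt g₁ = src g₂
  src_e : ∀ m, src (e m) = m
  tgt_e : ∀ m, tgt (e m) = m
  dm_inv_inv : ∀ {g₁ g₂ : G}, Dm g₁ g₂ → Dm (inv g₂) (inv g₁)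
  mul_inv_inv : ∀ {g₁ g₂ : G}, Dm g₁ g₂ → mul (inv g₂) (inv g₁) = inv (mul g₁ g₂)
  dm_e_src : ∀ g, Dm (e (src g)) g
  dm_e_tgt : ∀ g, Dm g (e (tgt g))
  e_src_mul : ∀ g, mul (e (src g)) g = g
  mul_e_tgt : ∀ g, mul g (e (tgt g)) = g
  dm_inv_right : ∀ g, Dm g (inv g)
  dm_inv_left : ∀ g, Dm (inv g) g
  mul_inv_self : ∀ g, mul g (inv g) = e (src g)
  inv_mul_self : ∀ g, mul (inv g) g = e (tgt g)
  dm_assoc : ∀ {g₁ g₂ g₃ : G}, Dm g₁ g₂ → Dm g₂ g₃ → Dm g₁ (mul g₂ g₃) → Dm (mul g₁ g₂) g₃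
  mul_assoc : ∀ {g₁ g₂ g₃ : G}, Dm g₁ g₂ → Dm g₂ g₃ → Dm g₁ (mul g₂ g₃) →
    mul (mul g₁ g₂) g₃ = mul g₁ (mul g₂ g₃)

namespace LocalGroupoid

/-- A morphism of local groupoids. -/
structure IsMorphism {M M' G G' : Type*} (A : LocalGroupoid M G) (B : LocalGroupoid M' G')
    (F : G → G') : Prop where
  maps_e : ∀ m, ∃ m', F (A.e m) = B.e m'
  dm : ∀ {g₁ g₂ : G}, A.Dm g₁ g₂ → B.Dm (F g₁) (F g₂)
  map_mul : ∀ {g₁ g₂ : G}, A.Dm g₁ g₂ → F (A.mul g₁ g₂) = B.mul (F g₁) (F g₂)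

/-- A morphism of local groupoids over `id_M` (the induced map on bases is the identity). -/
def IsMorphismOverId {M G G' : Type*} (A : LocalGroupoid M G) (B : LocalGroupoid M G')
    (F : G → G') : Prop :=
  IsMorphism A B F ∧ ∀ m, B.src (F (A.e m)) = m

/-- A local groupoid is totally intransitive if `α = β`. -/
def TotallyIntransitive {M G : Type*} (A : LocalGroupoid M G) : Prop :=
  ∀ g, A.src g = A.tgt g

/-- A groupoid is a local groupoid in which all composable pairs are multiplicable,
i.e. `G_m = G₂`. -/
def IsGroupoid {M G : Type*} (A : LocalGroupoid M G) : Prop :=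
  ∀ g₁ g₂, A.tgt g₁ = A.src g₂ → A.Dm g₁ g₂

/-- An external action of a local groupoid `G` on a totally intransitive groupoid `H`,
encoded as a total function `act` whose values on pairs with `β_G g ≠ α_H h` are
irrelevant. -/
def IsExternalAction {M GC HC : Type*} (AG : LocalGroupoid M GC) (AH : LocalGroupoid M HC)
    (act : GC → HC → HC) : Prop :=
  (∀ g h, AG.tgt g = AH.src h → AH.src (act g h) = AG.src g) ∧
  (∀ g₁ g₂ h, AG.Dm g₁ g₂ → AG.tgt g₂ = AH.src h →
    act (AG.mul g₁ g₂) h = act g₁ (act g₂ h)) ∧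
  (∀ g h₁ h₂, AG.tgt g = AH.src h₁ → AH.tgt h₁ = AH.src h₂ →
    act g (AH.mul h₁ h₂) = AH.mul (act g h₁) (act g h₂)) ∧
  (∀ h, act (AG.e (AH.src h)) h = h)

end LocalGroupoid


namespace LocalGroupoid

section Aux
variable {M G : Type*} (A : LocalGroupoid M G)

lemma aux_src_inv (g : G) : A.src (A.inv g) = A.tgt g :=
  (A.comp_of_dm (A.dm_inv_right g)).symm

lemma aux_tgt_inv (g : G) : A.tgt (A.inv g) = A.src g :=
  A.comp_of_dm (A.dm_inv_left g)

lemma aux_tgt_mul {g₁ g₂ : G} (h : A.Dm g₁ g₂) : A.tgt (A.mul g₁ g₂) = A.tgt g₂ := by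
  have h23 : A.Dm g₂ (A.inv g₂) := A.dm_inv_right g₂
  have h13 : A.Dm g₁ (A.mul g₂ (A.inv g₂)) := by
    rw [A.mul_inv_self g₂, ← A.comp_of_dm h]; exact A.dm_e_tgt g₁
  have h' := A.comp_of_dm (A.dm_assoc h h23 h13)
  rw [h', A.aux_src_inv]

lemma aux_src_mul {g₁ g₂ : G} (h : A.Dm g₁ g₂) : A.src (A.mul g₁ g₂) = A.src g₁ := by
  have h1 : A.tgt (A.inv (A.mul g₁ g₂)) = A.src (A.mul g₁ g₂) := A.aux_tgt_inv _
  rw [← A.mul_inv_inv h] at h1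
  rw [← h1, A.aux_tgt_mul (A.dm_inv_inv h), A.aux_tgt_inv]

end Aux

section TI
variable {M HC : Type*} {AH : LocalGroupoid M HC}

lemma aux_dm (hTI : AH.TotallyIntransitive) (hHGpd : AH.IsGroupoid)
    {h₁ h₂ : HC} (e : AH.src h₁ = AH.src h₂) : AH.Dm h₁ h₂ :=
  hHGpd _ _ ((hTI h₁).symm.trans e)

lemma aux_idem (hTI : AH.TotallyIntransitive) (hHGpd : AH.IsGroupoid)
    {x : HC} (hx : AH.mul x x = x) : x = AH.e (AH.tgt x) := by
  have d1 : AH.Dm (AH.inv x) x := AH.dm_inv_left x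
  have d2 : AH.Dm x x := aux_dm hTI hHGpd rfl
  have d3 : AH.Dm (AH.inv x) (AH.mul x x) := by rw [hx]; exact d1
  have key := AH.mul_assoc d1 d2 d3
  rw [AH.inv_mul_self x, hx, AH.inv_mul_self x, ← hTI x, AH.e_src_mul, hTI x] at key
  exact key

lemma aux_cancel (hTI : AH.TotallyIntransitive) (hHGpd : AH.IsGroupoid)
    {a b : HC} (hs : AH.src a = AH.src b)
    (hab : AH.mul a b = AH.e (AH.src a)) : b = AH.inv a := by
  have d1 : AH.Dm (AH.inv a) a := AH.dm_inv_left a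
  have d2 : AH.Dm a b := aux_dm hTI hHGpd hs
  have d3 : AH.Dm (AH.inv a) (AH.mul a b) := by
    rw [hab, ← AH.aux_tgt_inv a]; exact AH.dm_e_tgt _
  have key := AH.mul_assoc d1 d2 d3
  rw [AH.inv_mul_self, hab, ← AH.aux_tgt_inv a, AH.mul_e_tgt,
    ← hTI a, hs, AH.e_src_mul] at key
  exact key

end TI

section Act
variable {M HC GC : Type*} {AH : LocalGroupoid M HC} {AG : LocalGroupoid M GC}
  {act : GC → HC → HC}

lemma aux_act_e (hTI : AH.TotallyIntransitive) (hHGpd : AH.IsGroupoid)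
    (hact : IsExternalAction AG AH act) {g : GC} {m : M} (hg : AG.tgt g = m) :
    act g (AH.e m) = AH.e (AG.src g) := by
  subst hg
  set x := act g (AH.e (AG.tgt g)) with hxdef
  have hsx : AH.src x = AG.src g := hact.1 g _ (by rw [AH.src_e])
  have emul : AH.mul (AH.e (AG.tgt g)) (AH.e (AG.tgt g)) = AH.e (AG.tgt g) := by
    have := AH.mul_e_tgt (AH.e (AG.tgt g)); rwa [AH.tgt_e] at this
  have hx : AH.mul x x = x := by
    have h3 := hact.2.2.1 g (AH.e (AG.tgt g)) (AH.e (AG.tgt g))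
      (by rw [AH.src_e]) (by rw [AH.tgt_e, AH.src_e])
    rw [emul] at h3
    exact h3.symm
  have := aux_idem hTI hHGpd hx
  rw [this, ← hTI x, hsx]

lemma aux_act_inv (hTI : AH.TotallyIntransitive) (hHGpd : AH.IsGroupoid)
    (hact : IsExternalAction AG AH act) {g : GC} {h : HC} (hg : AG.tgt g = AH.src h) :
    act g (AH.inv h) = AH.inv (act g h) := by
  have hg' : AG.tgt g = AH.src (AH.inv h) :=
    hg.trans ((hTI h).trans (AH.aux_src_inv h).symm)
  have hsa : AH.src (act g h) = AG.src g := hact.1 g h hg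
  have hsb : AH.src (act g (AH.inv h)) = AG.src g := hact.1 g _ hg'
  refine aux_cancel hTI hHGpd (hsa.trans hsb.symm) ?_
  have h3 := hact.2.2.1 g h (AH.inv h) hg
    (AH.aux_src_inv h).symm
  rw [AH.mul_inv_self h, aux_act_e hTI hHGpd hact hg] at h3
  rw [← h3, hsa]

lemma aux_act_inv_act (hTI : AH.TotallyIntransitive)
    (hact : IsExternalAction AG AH act) {g : GC} {h : HC} (hh : AH.tgt h = AG.src g) :
    act g (act (AG.inv g) h) = h := by
  have h2 := hact.2.1 g (AG.inv g) h (AG.dm_inv_right g)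
    ((AG.aux_tgt_inv g).trans (((hTI h).trans hh)).symm)
  rw [AG.mul_inv_self g, ← (hTI h).trans hh, hact.2.2.2 h] at h2
  exact h2.symm

lemma aux_act_inv_act' (hact : IsExternalAction AG AH act)
    {g : GC} {h : HC} (hg : AG.tgt g = AH.src h) :
    act (AG.inv g) (act g h) = h := by
  have h2 := hact.2.1 (AG.inv g) g h (AG.dm_inv_left g) hg
  rw [AG.inv_mul_self g, hg, hact.2.2.2 h] at h2
  exact h2.symm

end Act

end LocalGroupoid

/-- The carrier of the semidirect product `H ⋊ G`:
pairs `(h, g)` with `β_H(h) = α_G(g)`. -/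
abbrev SDCarrier {M HC GC : Type*} (AH : LocalGroupoid M HC) (AG : LocalGroupoid M GC) :
    Type _ :=
  {p : HC × GC // AH.tgt p.1 = AG.src p.2}

/-- `P` is the semidirect product local groupoid `H ⋊ G` determined by the external
action `act`: its structure maps are characterized by the formulas of the paper
(the value of `P.mul` outside of `P_m` is irrelevant). -/
def IsSemidirectProduct {M HC GC : Type*} (AH : LocalGroupoid M HC) (AG : LocalGroupoid M GC)
    (act : GC → HC → HC) (P : LocalGroupoid M (SDCarrier AH AG)) : Prop :=
  (∀ p, P.src p = AG.src p.val.2) ∧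
  (∀ p, P.tgt p = AG.tgt p.val.2) ∧
  (∀ m, (P.e m).val = (AH.e m, AG.e m)) ∧
  (∀ p, (P.inv p).val = (AH.inv (act (AG.inv p.val.2) p.val.1), AG.inv p.val.2)) ∧
  (∀ p₁ p₂, P.Dm p₁ p₂ ↔ AG.Dm p₁.val.2 p₂.val.2) ∧
  (∀ p₁ p₂, P.Dm p₁ p₂ →
    (P.mul p₁ p₂).val =
      (AH.mul p₁.val.1 (act p₁.val.2 p₂.val.1), AG.mul p₁.val.2 p₂.val.2))

/-- The canonical inclusion `j_⋊ : H → H ⋊ G`, `j_⋊(h) = (h, ε_G(β_H(h)))`. -/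
def sdJ {M HC GC : Type*} (AH : LocalGroupoid M HC) (AG : LocalGroupoid M GC) (h : HC) :
    SDCarrier AH AG :=
  ⟨(h, AG.e (AH.tgt h)), (AG.src_e (AH.tgt h)).symm⟩

/-- The canonical projection `ρ_⋊ : H ⋊ G → G`, `ρ_⋊(h, g) = g`. -/
def sdRho {M HC GC : Type*} (AH : LocalGroupoid M HC) (AG : LocalGroupoid M GC)
    (p : SDCarrier AH AG) : GC :=
  p.val.2

/-- The canonical splitting `s_⋊ : G → H ⋊ G`, `s_⋊(g) = (ε_H(α_G(g)), g)`. -/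
def sdS {M HC GC : Type*} (AH : LocalGroupoid M HC) (AG : LocalGroupoid M GC) (g : GC) :
    SDCarrier AH AG :=
  ⟨(AH.e (AG.src g), g), AH.tgt_e (AG.src g)⟩

section SDP

open LocalGroupoid

variable {M HC GC : Type*} {AH : LocalGroupoid M HC} {AG : LocalGroupoid M GC}
  {act : GC → HC → HC}

lemma sd_cond (hTI : AH.TotallyIntransitive) (p : SDCarrier AH AG) :
    AH.src p.val.1 = AG.src p.val.2 := (hTI _).trans p.prop

def sdInv (hTI : AH.TotallyIntransitive) (hact : IsExternalAction AG AH act)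
    (p : SDCarrier AH AG) : SDCarrier AH AG :=
  ⟨(AH.inv (act (AG.inv p.val.2) p.val.1), AG.inv p.val.2), by
    rw [AH.aux_tgt_inv]
    exact hact.1 _ _ ((AG.aux_tgt_inv _).trans (sd_cond hTI p).symm)⟩

lemma sdInv_val (hTI : AH.TotallyIntransitive) (hact : IsExternalAction AG AH act)
    (p : SDCarrier AH AG) :
    (sdInv hTI hact p).val =
      (AH.inv (act (AG.inv p.val.2) p.val.1), AG.inv p.val.2) := rfl

lemma sd_mem_mul (hTI : AH.TotallyIntransitive) (hHGpd : AH.IsGroupoid)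
    (hact : IsExternalAction AG AH act) {p₁ p₂ : SDCarrier AH AG}
    (hd : AG.Dm p₁.val.2 p₂.val.2) :
    AH.tgt (AH.mul p₁.val.1 (act p₁.val.2 p₂.val.1)) =
      AG.src (AG.mul p₁.val.2 p₂.val.2) := by
  have hc : AG.tgt p₁.val.2 = AH.src p₂.val.1 :=
    (AG.comp_of_dm hd).trans (sd_cond hTI p₂).symm
  have hs2 : AH.src (act p₁.val.2 p₂.val.1) = AG.src p₁.val.2 := hact.1 _ _ hc
  have d : AH.Dm p₁.val.1 (act p₁.val.2 p₂.val.1) :=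
    aux_dm hTI hHGpd ((sd_cond hTI p₁).trans hs2.symm)
  rw [AH.aux_tgt_mul d, ← hTI _, hs2, AG.aux_src_mul hd]

noncomputable def sdMul (hTI : AH.TotallyIntransitive) (hHGpd : AH.IsGroupoid)
    (hact : IsExternalAction AG AH act) (p₁ p₂ : SDCarrier AH AG) : SDCarrier AH AG :=
  @dite _ (AG.Dm p₁.val.2 p₂.val.2) (Classical.dec _)
    (fun hd =>
      ⟨(AH.mul p₁.val.1 (act p₁.val.2 p₂.val.1), AG.mul p₁.val.2 p₂.val.2),
        sd_mem_mul hTI hHGpd hact hd⟩)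
    (fun _ => p₁)

lemma sdMul_val (hTI : AH.TotallyIntransitive) (hHGpd : AH.IsGroupoid)
    (hact : IsExternalAction AG AH act) (p₁ p₂ : SDCarrier AH AG)
    (hd : AG.Dm p₁.val.2 p₂.val.2) :
    (sdMul hTI hHGpd hact p₁ p₂).val =
      (AH.mul p₁.val.1 (act p₁.val.2 p₂.val.1), AG.mul p₁.val.2 p₂.val.2) := by
  unfold sdMul
  rw [dif_pos hd]

noncomputable def sdP (hTI : AH.TotallyIntransitive) (hHGpd : AH.IsGroupoid)
    (hact : IsExternalAction AG AH act) : LocalGroupoid M (SDCarrier AH AG) where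
  src p := AG.src p.val.2
  tgt p := AG.tgt p.val.2
  e m := ⟨(AH.e m, AG.e m), by rw [AH.tgt_e, AG.src_e]⟩
  inv := sdInv hTI hact
  Dm p₁ p₂ := AG.Dm p₁.val.2 p₂.val.2
  mul := sdMul hTI hHGpd hact
  comp_of_dm hd := AG.comp_of_dm hd
  src_e m := AG.src_e m
  tgt_e m := AG.tgt_e m
  dm_inv_inv hd := AG.dm_inv_inv hd
  mul_inv_inv := by
    rintro ⟨⟨h₁, g₁⟩, hp₁⟩ ⟨⟨h₂, g₂⟩, hp₂⟩ hd
    have hc12 : AG.tgt g₁ = AG.src g₂ := AG.comp_of_dm hd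
    have hs1 : AH.src h₁ = AG.src g₁ := (hTI h₁).trans hp₁
    have hs2 : AH.src h₂ = AG.src g₂ := (hTI h₂).trans hp₂
    have hc1 : AG.tgt g₁ = AH.src h₂ := hc12.trans hs2.symm
    have hsact2 : AH.src (act g₁ h₂) = AG.src g₁ := hact.1 _ _ hc1
    have cond1 : AG.tgt (AG.inv g₁) = AH.src h₁ := (AG.aux_tgt_inv g₁).trans hs1.symm
    have d : AH.Dm h₁ (act g₁ h₂) := aux_dm hTI hHGpd (hs1.trans hsact2.symm)
    have ev := sdMul_val hTI hHGpd hact ⟨(h₁, g₁), hp₁⟩ ⟨(h₂, g₂), hp₂⟩ hd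
    apply Subtype.ext
    rw [sdMul_val hTI hHGpd hact _ _ (AG.dm_inv_inv hd)]
    simp only [sdInv_val, ev]
    rw [Prod.mk.injEq]
    refine ⟨?_, AG.mul_inv_inv hd⟩
    rw [← AG.mul_inv_inv hd]
    rw [hact.2.1 _ _ _ (AG.dm_inv_inv hd)
      ((AG.aux_tgt_inv g₁).trans (hs1.symm.trans (AH.aux_src_mul d).symm))]
    rw [hact.2.2.1 (AG.inv g₁) h₁ (act g₁ h₂) cond1 (hp₁.trans hsact2.symm)]
    rw [aux_act_inv_act' hact hc1]
    have hsu : AH.src (act (AG.inv g₁) h₁) = AG.src g₂ :=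
      (hact.1 _ _ cond1).trans ((AG.aux_src_inv g₁).trans hc12)
    have condA : AG.tgt (AG.inv g₂) = AH.src (act (AG.inv g₁) h₁) :=
      (AG.aux_tgt_inv g₂).trans hsu.symm
    have condw : AG.tgt (AG.inv g₂) = AH.src h₂ := (AG.aux_tgt_inv g₂).trans hs2.symm
    rw [hact.2.2.1 (AG.inv g₂) (act (AG.inv g₁) h₁) h₂ condA
      ((hTI _).symm.trans (hsu.trans hs2.symm))]
    have dvw : AH.Dm (act (AG.inv g₂) (act (AG.inv g₁) h₁)) (act (AG.inv g₂) h₂) :=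
      aux_dm hTI hHGpd ((hact.1 _ _ condA).trans (hact.1 _ _ condw).symm)
    rw [← AH.mul_inv_inv dvw]
    rw [← aux_act_inv hTI hHGpd hact condA]
  dm_e_src p := AG.dm_e_src p.val.2
  dm_e_tgt p := AG.dm_e_tgt p.val.2
  e_src_mul := by
    rintro ⟨⟨h, g⟩, hp⟩
    apply Subtype.ext
    rw [sdMul_val hTI hHGpd hact _ _ (AG.dm_e_src g), Prod.mk.injEq]
    dsimp only
    refine ⟨?_, AG.e_src_mul g⟩
    have hsg : AH.src h = AG.src g := (hTI h).trans hp
    rw [← hsg, hact.2.2.2 h, AH.e_src_mul]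
  mul_e_tgt := by
    rintro ⟨⟨h, g⟩, hp⟩
    apply Subtype.ext
    rw [sdMul_val hTI hHGpd hact _ _ (AG.dm_e_tgt g), Prod.mk.injEq]
    dsimp only
    refine ⟨?_, AG.mul_e_tgt g⟩
    rw [aux_act_e hTI hHGpd hact rfl, ← hp, AH.mul_e_tgt]
  dm_inv_right p := AG.dm_inv_right p.val.2
  dm_inv_left p := AG.dm_inv_left p.val.2
  mul_inv_self := by
    rintro ⟨⟨h, g⟩, hp⟩
    apply Subtype.ext
    rw [sdMul_val hTI hHGpd hact _ _ (AG.dm_inv_right g), Prod.mk.injEq]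
    dsimp only
    refine ⟨?_, AG.mul_inv_self g⟩
    show AH.mul h (act g (AH.inv (act (AG.inv g) h))) = AH.e (AG.src g)
    have hc : AG.tgt g = AH.src (act (AG.inv g) h) := by
      rw [hact.1 _ _ ((AG.aux_tgt_inv g).trans ((hTI h).trans hp).symm), AG.aux_src_inv]
    rw [aux_act_inv hTI hHGpd hact hc, aux_act_inv_act hTI hact hp, AH.mul_inv_self,
      (hTI h).trans hp]
  inv_mul_self := by
    rintro ⟨⟨h, g⟩, hp⟩
    apply Subtype.ext
    rw [sdMul_val hTI hHGpd hact _ _ (AG.dm_inv_left g), Prod.mk.injEq]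
    dsimp only
    refine ⟨?_, AG.inv_mul_self g⟩
    show AH.mul (AH.inv (act (AG.inv g) h)) (act (AG.inv g) h) = AH.e (AG.tgt g)
    rw [AH.inv_mul_self, ← hTI _,
      hact.1 _ _ ((AG.aux_tgt_inv g).trans ((hTI h).trans hp).symm), AG.aux_src_inv]
  dm_assoc := by
    intro p₁ p₂ p₃ h12 h23 h123
    have h123' : AG.Dm p₁.val.2 (AG.mul p₂.val.2 p₃.val.2) := by
      rwa [congrArg Prod.snd (sdMul_val hTI hHGpd hact p₂ p₃ h23)] at h123
    show AG.Dm (sdMul hTI hHGpd hact p₁ p₂).val.2 p₃.val.2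
    rw [congrArg Prod.snd (sdMul_val hTI hHGpd hact p₁ p₂ h12)]
    exact AG.dm_assoc h12 h23 h123'
  mul_assoc := by
    rintro ⟨⟨h₁, g₁⟩, hp₁⟩ ⟨⟨h₂, g₂⟩, hp₂⟩ ⟨⟨h₃, g₃⟩, hp₃⟩ h12 h23 h123
    have ev23 := sdMul_val hTI hHGpd hact ⟨(h₂, g₂), hp₂⟩ ⟨(h₃, g₃), hp₃⟩ h23
    have h123' : AG.Dm g₁ (AG.mul g₂ g₃) := by
      rwa [congrArg Prod.snd ev23] at h123
    have ev12 := sdMul_val hTI hHGpd hact ⟨(h₁, g₁), hp₁⟩ ⟨(h₂, g₂), hp₂⟩ h12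
    have hdL : AG.Dm (sdMul hTI hHGpd hact ⟨(h₁, g₁), hp₁⟩ ⟨(h₂, g₂), hp₂⟩).val.2 g₃ := by
      rw [congrArg Prod.snd ev12]; exact AG.dm_assoc h12 h23 h123'
    apply Subtype.ext
    rw [sdMul_val hTI hHGpd hact _ _ hdL, sdMul_val hTI hHGpd hact _ _ h123]
    simp only [ev12, ev23]
    rw [Prod.mk.injEq]
    refine ⟨?_, AG.mul_assoc h12 h23 h123'⟩
    have hs1 : AH.src h₁ = AG.src g₁ := (hTI h₁).trans hp₁
    have hs2 : AH.src h₂ = AG.src g₂ := (hTI h₂).trans hp₂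
    have hs3 : AH.src h₃ = AG.src g₃ := (hTI h₃).trans hp₃
    have hc1 : AG.tgt g₁ = AH.src h₂ := (AG.comp_of_dm h12).trans hs2.symm
    have hc2 : AG.tgt g₂ = AH.src h₃ := (AG.comp_of_dm h23).trans hs3.symm
    rw [hact.2.2.1 g₁ h₂ (act g₂ h₃) hc1 (hp₂.trans (hact.1 _ _ hc2).symm)]
    rw [← hact.2.1 g₁ g₂ h₃ h12 hc2]
    have hsy2 : AH.src (act g₁ h₂) = AG.src g₁ := hact.1 _ _ hc1
    have cond3 : AG.tgt (AG.mul g₁ g₂) = AH.src h₃ := (AG.aux_tgt_mul h12).trans hc2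
    have hsy3 : AH.src (act (AG.mul g₁ g₂) h₃) = AG.src g₁ :=
      (hact.1 _ _ cond3).trans (AG.aux_src_mul h12)
    have dA : AH.Dm h₁ (act g₁ h₂) := aux_dm hTI hHGpd (hs1.trans hsy2.symm)
    have dB : AH.Dm (act g₁ h₂) (act (AG.mul g₁ g₂) h₃) :=
      aux_dm hTI hHGpd (hsy2.trans hsy3.symm)
    have dC : AH.Dm h₁ (AH.mul (act g₁ h₂) (act (AG.mul g₁ g₂) h₃)) :=
      aux_dm hTI hHGpd (hs1.trans ((AH.aux_src_mul dB).trans hsy2).symm)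
    exact AH.mul_assoc dA dB dC

end SDP

/-- The semidirect product `H ⋊ G` of a totally intransitive groupoid `H` by a local
groupoid `G` along an external action is a well-defined local groupoid over `M`,
with the structure maps given by the formulas of the paper. -/
theorem semidirect_product_is_local_groupoid {M HC GC : Type*}
    (AH : LocalGroupoid M HC) (AG : LocalGroupoid M GC)
    (hTI : LocalGroupoid.TotallyIntransitive AH)
    (hHGpd : LocalGroupoid.IsGroupoid AH)
    (act : GC → HC → HC) (hact : LocalGroupoid.IsExternalAction AG AH act) :
    ∃ P : LocalGroupoid M (SDCarrier AH AG), IsSemidirectProduct AH AG act P :=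
  ⟨sdP hTI hHGpd hact, fun _ => rfl, fun _ => rfl, fun _ => rfl, fun _ => rfl,
    fun _ _ => Iff.rfl, fun p₁ p₂ hd => sdMul_val hTI hHGpd hact p₁ p₂ hd⟩
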